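/- arXiv:1410.2596 — 4 statements merged into one kernel-verified Lean document; each statement's English description precedes it below -/
import Mathlib

section
/- Let X be a real m×n matrix and let 0 < r ≤ min(m,n) and λ ≥ 0. Consider minimizing F_λ(Z) := (1/2)‖X − Z‖_F² + λ‖Z‖_* over all m×n real matrices Z with rank(Z) ≤ r. A minimizer is given by Ẑ = U_r S_λ(D_r) V_rᵀ, where U_r D_r V_rᵀ is the rank-r truncated singular value decomposition of X (U_r and V_r have orthonormal columns, D_r = diag(σ₁,…,σ_r) contains the r largest singular values of X in decreasing order) and S_λ(D_r) = diag((σ₁−λ)₊,…,(σ_r−λ)₊). -/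
/-!
Write `X = U diag(σ) Vᵀ`, split `σ = c + d` with `c = min(σ, λ)` and `d = (σ - λ)₊`, and put
`Y = U diag(c) Vᵀ`. As `‖Y‖_op ≤ λ`, duality between the operator and the nuclear norm gives
`λ‖Z‖_* ≥ tr(YᵀZ)`, and completing the square,
`F_λ(Z) ≥ ½‖U diag(d) Vᵀ - Z‖_F² + tr(YᵀX) - ½‖Y‖_F²`.
For `rank Z ≤ r`, Eckart–Young bounds `‖U diag(d) Vᵀ - Z‖_F²` below by `∑_{i ≥ r} d_i²`, and
`Ẑ = U diag(d_1, …, d_r, 0, …, 0) Vᵀ` attains the resulting bound since `‖Ẑ‖_* ≤ ∑_{i < r} d_i`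
and `λ d_i = c_i d_i`.

For Eckart–Young let `P` be the orthogonal projection onto the row space of `Z`, so `tr P ≤ r`.
Then `‖M - Z‖_F² ≥ ‖(M - Z)(1 - P)‖_F² = ∑ d_i² (1 - w_i)` for `M = U diag(d) Vᵀ`, where the
weights `w_i = ‖P v_i‖²` lie in `[0, 1]` and sum to at most `r`; as `d` is decreasing, the
right-hand side is at least `∑_{i ≥ r} d_i²`.
-/

noncomputable section

open Matrix

/-- Squared Frobenius norm of a real matrix. -/
def frobSq {m n : ℕ} (M : Matrix (Fin m) (Fin n) ℝ) : ℝ := ∑ i, ∑ j, (M i j) ^ 2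

/-- Nuclear norm: sum of the singular values, i.e. of the square roots of the
eigenvalues of `Zᴴ * Z`. -/
def nuclearNorm {m n : ℕ} (Z : Matrix (Fin m) (Fin n) ℝ) : ℝ :=
  ∑ i, Real.sqrt ((Matrix.isHermitian_conjTranspose_mul_self Z).eigenvalues i)

/-- `U * diagonal σ * Vᵀ` is a (thin) singular value decomposition of `X`, with the
singular values `σ` listed in decreasing order. -/
def IsThinSVD {m n p : ℕ} (X : Matrix (Fin m) (Fin n) ℝ) (U : Matrix (Fin m) (Fin p) ℝ)
    (σ : Fin p → ℝ) (V : Matrix (Fin n) (Fin p) ℝ) : Prop :=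
  X = U * Matrix.diagonal σ * Vᵀ ∧ Uᵀ * U = 1 ∧ Vᵀ * V = 1 ∧
    (∀ i, 0 ≤ σ i) ∧ Antitone σ

open Finset
open scoped Matrix.Norms.L2Operator

section L2OpNorm

variable {m n p : Type*} [Fintype m] [Fintype n] [Fintype p] [DecidableEq n] [DecidableEq p]

lemma Matrix.sum_sq_mulVec_le (A : Matrix m n ℝ) (x : n → ℝ) :
    ∑ i, (A *ᵥ x) i ^ 2 ≤ ‖A‖ ^ 2 * ∑ j, x j ^ 2 := by
  have h := A.l2_opNorm_mulVec (WithLp.toLp 2 x)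
  rw [← sq_le_sq₀ (norm_nonneg _) (by positivity), mul_pow, EuclideanSpace.norm_sq_eq,
    EuclideanSpace.norm_sq_eq] at h
  simpa using h

lemma Matrix.l2_opNorm_transpose [DecidableEq m] (A : Matrix m n ℝ) : ‖Aᵀ‖ = ‖A‖ := by
  rw [← conjTranspose_eq_transpose_of_trivial, l2_opNorm_conjTranspose]

lemma Matrix.l2_opNorm_transpose_mul_self (A : Matrix m n ℝ) : ‖Aᵀ * A‖ = ‖A‖ ^ 2 := by
  rw [sq, ← conjTranspose_eq_transpose_of_trivial, l2_opNorm_conjTranspose_mul_self]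

lemma Matrix.l2_opNorm_le_one_of_transpose_mul_self_eq_one {A : Matrix m n ℝ}
    (h : Aᵀ * A = 1) : ‖A‖ ≤ 1 := by
  have : ‖A‖ ^ 2 ≤ 1 := by
    rw [← l2_opNorm_transpose_mul_self, h]; exact (IsStarProjection.one _).norm_le
  nlinarith [norm_nonneg A]

lemma Matrix.l2_opNorm_mul_diagonal_mul_transpose_le [DecidableEq m] {U : Matrix m p ℝ}
    {V : Matrix n p ℝ} (hU : Uᵀ * U = 1) (hV : Vᵀ * V = 1) (e : p → ℝ) :
    ‖U * diagonal e * Vᵀ‖ ≤ ‖e‖ := by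
  calc ‖U * diagonal e * Vᵀ‖ ≤ ‖U‖ * ‖diagonal e‖ * ‖Vᵀ‖ :=
        (l2_opNorm_mul _ _).trans (by gcongr; exact l2_opNorm_mul _ _)
    _ ≤ 1 * ‖e‖ * 1 := by
        rw [l2_opNorm_diagonal, l2_opNorm_transpose]
        gcongr
        · exact l2_opNorm_le_one_of_transpose_mul_self_eq_one hU
        · exact l2_opNorm_le_one_of_transpose_mul_self_eq_one hV
    _ = ‖e‖ := by ring

end L2OpNorm

lemma Matrix.isStarProjection_iff_transpose {n : Type*} [Fintype n] {P : Matrix n n ℝ} :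
    IsStarProjection P ↔ P * P = P ∧ Pᵀ = P := by
  rw [isStarProjection_iff, IsSelfAdjoint, star_eq_conjTranspose,
    conjTranspose_eq_transpose_of_trivial]
  rfl

section Trace

variable {m n p : Type*} [Fintype m]

lemma Matrix.transpose_mul_self_apply_self (A : Matrix m n ℝ) (i : n) :
    (Aᵀ * A) i i = ∑ k, A k i ^ 2 := by
  simp [mul_apply, sq]

lemma Matrix.trace_transpose_mul_comm [Fintype n] (A B : Matrix m n ℝ) :
    trace (Aᵀ * B) = trace (Bᵀ * A) := by
  rw [← trace_transpose, transpose_mul, transpose_transpose]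

lemma Matrix.trace_transpose_mul_mul_le [Fintype n] [Fintype p] [DecidableEq n]
    (A : Matrix m p ℝ) (Y : Matrix m n ℝ) (B : Matrix n p ℝ) :
    trace (Aᵀ * Y * B) ≤ ‖Y‖ * ∑ i, √((Aᵀ * A) i i) * √((Bᵀ * B) i i) := by
  rw [mul_sum]
  refine sum_le_sum fun i _ => ?_
  have hcol : (Aᵀ * Y * B) i i = ∑ k, A k i * (Y *ᵥ fun j => B j i) k := by
    simp only [mul_apply, transpose_apply, mulVec, dotProduct, sum_mul, mul_sum, mul_assoc]
    exact sum_comm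
  have hY : √(∑ k, (Y *ᵥ fun j => B j i) k ^ 2) ≤ ‖Y‖ * √((Bᵀ * B) i i) := by
    rw [transpose_mul_self_apply_self, ← Real.sqrt_sq (norm_nonneg Y),
      ← Real.sqrt_mul (sq_nonneg _)]
    exact Real.sqrt_le_sqrt (sum_sq_mulVec_le Y _)
  calc (Aᵀ * Y * B) i i
      ≤ √((Aᵀ * A) i i) * √(∑ k, (Y *ᵥ fun j => B j i) k ^ 2) := by
        rw [hcol, transpose_mul_self_apply_self]; exact Real.sum_mul_le_sqrt_mul_sqrt _ _ _
    _ ≤ √((Aᵀ * A) i i) * (‖Y‖ * √((Bᵀ * B) i i)) := by gcongr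
    _ = ‖Y‖ * (√((Aᵀ * A) i i) * √((Bᵀ * B) i i)) := by ring

end Trace

section Frobenius

variable {m n p : ℕ}

lemma frobSq_nonneg (M : Matrix (Fin m) (Fin n) ℝ) : 0 ≤ frobSq M := by
  unfold frobSq; positivity

lemma frobSq_eq_trace (M : Matrix (Fin m) (Fin n) ℝ) : frobSq M = trace (Mᵀ * M) := by
  simp only [frobSq, trace, Matrix.diag, transpose_mul_self_apply_self]
  exact sum_comm

lemma frobSq_sub (A B : Matrix (Fin m) (Fin n) ℝ) :
    frobSq (A - B) = frobSq A - 2 * trace (Aᵀ * B) + frobSq B := by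
  simp only [frobSq_eq_trace, transpose_sub, Matrix.sub_mul, Matrix.mul_sub, trace_sub,
    trace_transpose_mul_comm B A]
  ring

lemma frobSq_mul_le (A : Matrix (Fin m) (Fin n) ℝ) (B : Matrix (Fin n) (Fin p) ℝ) :
    frobSq (A * B) ≤ frobSq A * ‖B‖ ^ 2 := by
  have hrow : ∀ i j, (A * B) i j = (Bᵀ *ᵥ A i) j := fun i j => by
    simp [mul_apply, mulVec, dotProduct, mul_comm]
  simp only [frobSq, hrow, sum_mul]
  refine sum_le_sum fun i _ => ?_
  have := sum_sq_mulVec_le Bᵀ (A i)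
  rw [l2_opNorm_transpose] at this
  rw [← sum_mul]
  linarith

lemma frobSq_mul_of_transpose_mul_self_eq_one {U : Matrix (Fin m) (Fin p) ℝ} (hU : Uᵀ * U = 1)
    (A : Matrix (Fin p) (Fin n) ℝ) : frobSq (U * A) = frobSq A := by
  rw [frobSq_eq_trace, frobSq_eq_trace, transpose_mul, Matrix.mul_assoc, ← Matrix.mul_assoc Uᵀ,
    hU, Matrix.one_mul]

lemma frobSq_diagonal_mul (e : Fin m → ℝ) (B : Matrix (Fin m) (Fin n) ℝ) :
    frobSq (diagonal e * B) = ∑ i, e i ^ 2 * ∑ j, B i j ^ 2 := by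
  simp [frobSq, diagonal_mul, mul_pow, mul_sum]

lemma frobSq_mul_eq_trace_of_isStarProjection (A : Matrix (Fin m) (Fin n) ℝ)
    {P : Matrix (Fin n) (Fin n) ℝ} (hP : IsStarProjection P) :
    frobSq (A * P) = trace (Aᵀ * A * P) := by
  obtain ⟨hi, hs⟩ := isStarProjection_iff_transpose.mp hP
  rw [frobSq_eq_trace, transpose_mul, hs, trace_mul_cycle, Matrix.mul_assoc A, hi,
    trace_mul_comm, Matrix.mul_assoc]

lemma frobSq_mul_one_sub_of_isStarProjection (A : Matrix (Fin m) (Fin n) ℝ)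
    {P : Matrix (Fin n) (Fin n) ℝ} (hP : IsStarProjection P) :
    frobSq (A * (1 - P)) = frobSq A - frobSq (A * P) := by
  rw [frobSq_mul_eq_trace_of_isStarProjection A hP.one_sub,
    frobSq_mul_eq_trace_of_isStarProjection A hP, frobSq_eq_trace, Matrix.mul_sub,
    Matrix.mul_one, trace_sub]

lemma trace_transpose_mul_diagonal_mul_transpose {U : Matrix (Fin m) (Fin p) ℝ}
    {V : Matrix (Fin n) (Fin p) ℝ} (hU : Uᵀ * U = 1) (hV : Vᵀ * V = 1) (a b : Fin p → ℝ) :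
    trace ((U * diagonal a * Vᵀ)ᵀ * (U * diagonal b * Vᵀ)) = ∑ i, a i * b i := by
  have : (U * diagonal a * Vᵀ)ᵀ * (U * diagonal b * Vᵀ) = V * (diagonal a * diagonal b) * Vᵀ := by
    simp only [transpose_mul, transpose_transpose, diagonal_transpose, Matrix.mul_assoc]
    rw [← Matrix.mul_assoc Uᵀ, hU, Matrix.one_mul]
  rw [this, trace_mul_cycle, hV, Matrix.one_mul, diagonal_mul_diagonal, trace_diagonal]

lemma frobSq_mul_diagonal_mul_transpose {U : Matrix (Fin m) (Fin p) ℝ}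
    {V : Matrix (Fin n) (Fin p) ℝ} (hU : Uᵀ * U = 1) (hV : Vᵀ * V = 1) (e : Fin p → ℝ) :
    frobSq (U * diagonal e * Vᵀ) = ∑ i, e i ^ 2 := by
  simp only [frobSq_eq_trace, trace_transpose_mul_diagonal_mul_transpose hU hV, sq]

end Frobenius

section NuclearNorm

variable {m n p : ℕ}

lemma Matrix.IsHermitian.exists_orthogonal_diagonalization {A : Matrix (Fin n) (Fin n) ℝ}
    (hA : A.IsHermitian) :
    ∃ W : Matrix (Fin n) (Fin n) ℝ, Wᵀ * W = 1 ∧ W * Wᵀ = 1 ∧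
      A = W * diagonal hA.eigenvalues * Wᵀ := by
  refine ⟨hA.eigenvectorUnitary, ?_, ?_, ?_⟩
  · simpa [star_eq_conjTranspose] using Unitary.coe_star_mul_self hA.eigenvectorUnitary
  · simpa [star_eq_conjTranspose] using Unitary.coe_mul_star_self hA.eigenvectorUnitary
  · conv_lhs => rw [hA.spectral_theorem]
    simp [Unitary.conjStarAlgAut_apply, star_eq_conjTranspose]

lemma exists_orthogonal_transpose_mul_self_mul_eq_diagonal (Z : Matrix (Fin m) (Fin n) ℝ) :
    ∃ W : Matrix (Fin n) (Fin n) ℝ, Wᵀ * W = 1 ∧ W * Wᵀ = 1 ∧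
      (Z * W)ᵀ * (Z * W) = diagonal (isHermitian_conjTranspose_mul_self Z).eigenvalues := by
  set μ := (isHermitian_conjTranspose_mul_self Z).eigenvalues
  obtain ⟨W, hW, hW', hZ⟩ :=
    (isHermitian_conjTranspose_mul_self Z).exists_orthogonal_diagonalization
  refine ⟨W, hW, hW', ?_⟩
  replace hZ : Zᵀ * Z = W * diagonal μ * Wᵀ := by
    rw [← conjTranspose_eq_transpose_of_trivial]; exact hZ
  rw [transpose_mul, Matrix.mul_assoc, ← Matrix.mul_assoc Zᵀ, hZ]
  simp only [Matrix.mul_assoc, hW, Matrix.mul_one]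
  rw [← Matrix.mul_assoc, hW, Matrix.one_mul]

lemma nuclearNorm_nonneg (Z : Matrix (Fin m) (Fin n) ℝ) : 0 ≤ nuclearNorm Z :=
  sum_nonneg fun _ _ => Real.sqrt_nonneg _

lemma trace_transpose_mul_le_l2_opNorm_mul_nuclearNorm (Y Z : Matrix (Fin m) (Fin n) ℝ) :
    trace (Yᵀ * Z) ≤ ‖Y‖ * nuclearNorm Z := by
  obtain ⟨W, hW, hW', hZW⟩ := exists_orthogonal_transpose_mul_self_mul_eq_diagonal Z
  have htrace : trace ((Z * W)ᵀ * Y * W) = trace (Yᵀ * Z) := by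
    rw [trace_mul_comm, transpose_mul, ← Matrix.mul_assoc, ← Matrix.mul_assoc, hW',
      Matrix.one_mul, trace_transpose_mul_comm]
  rw [← htrace]
  refine (trace_transpose_mul_mul_le _ _ _).trans_eq ?_
  rw [hZW, hW]
  simp [nuclearNorm]

lemma exists_l2_opNorm_le_one_trace_eq_nuclearNorm (Z : Matrix (Fin m) (Fin n) ℝ) :
    ∃ G : Matrix (Fin m) (Fin n) ℝ, ‖G‖ ≤ 1 ∧ trace (Gᵀ * Z) = nuclearNorm Z := by
  obtain ⟨W, hW, hW', hZW⟩ := exists_orthogonal_transpose_mul_self_mul_eq_diagonal Z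
  set μ := (isHermitian_conjTranspose_mul_self Z).eigenvalues
  -- `ι i = 0` when `μ i = 0`, since `√0 = 0` and `0⁻¹ = 0`
  set ι : Fin n → ℝ := fun i => (√(μ i))⁻¹
  have hιμ : ∀ i, ι i * μ i = √(μ i) := fun i => by rw [inv_mul_eq_div, Real.div_sqrt]
  refine ⟨Z * W * diagonal ι * Wᵀ, ?_, ?_⟩
  · have hGG : (Z * W * diagonal ι * Wᵀ)ᵀ * (Z * W * diagonal ι * Wᵀ)
        = W * diagonal (fun i => ι i * μ i * ι i) * Wᵀ := by
      rw [← diagonal_mul_diagonal, ← diagonal_mul_diagonal, ← hZW]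
      simp only [transpose_mul, transpose_transpose, diagonal_transpose, Matrix.mul_assoc]
    rw [← sq_le_one_iff₀ (norm_nonneg _), ← l2_opNorm_transpose_mul_self, hGG]
    refine (l2_opNorm_mul_diagonal_mul_transpose_le hW hW _).trans ?_
    refine pi_norm_le_iff_of_nonneg zero_le_one |>.mpr fun i => ?_
    rw [hιμ, Real.norm_eq_abs, abs_of_nonneg (by positivity)]
    exact mul_inv_le_one
  · have : (Z * W * diagonal ι * Wᵀ)ᵀ * Z = W * (diagonal ι * ((Z * W)ᵀ * Z)) := by
      simp only [transpose_mul, diagonal_transpose, transpose_transpose, Matrix.mul_assoc]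
    rw [this, trace_mul_comm, Matrix.mul_assoc, Matrix.mul_assoc, hZW, diagonal_mul_diagonal,
      trace_diagonal]
    simp only [hιμ, nuclearNorm, μ]

lemma nuclearNorm_mul_diagonal_mul_transpose_le {U : Matrix (Fin m) (Fin p) ℝ}
    {V : Matrix (Fin n) (Fin p) ℝ} (hU : Uᵀ * U = 1) (hV : Vᵀ * V = 1) (e : Fin p → ℝ) :
    nuclearNorm (U * diagonal e * Vᵀ) ≤ ∑ i, |e i| := by
  obtain ⟨G, hG, hGZ⟩ := exists_l2_opNorm_le_one_trace_eq_nuclearNorm (U * diagonal e * Vᵀ)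
  have htrace : trace ((U * diagonal e)ᵀ * G * V) = trace (Gᵀ * (U * diagonal e * Vᵀ)) := by
    rw [← trace_transpose, transpose_mul, transpose_mul, transpose_transpose, trace_mul_comm]
    simp only [Matrix.mul_assoc]
  have hUe : (U * diagonal e)ᵀ * (U * diagonal e) = diagonal (fun i => e i ^ 2) := by
    rw [transpose_mul, Matrix.mul_assoc, ← Matrix.mul_assoc Uᵀ, hU, Matrix.one_mul,
      diagonal_transpose, diagonal_mul_diagonal]
    simp only [sq]
  calc nuclearNorm (U * diagonal e * Vᵀ) ≤ ‖G‖ * ∑ i, |e i| := by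
        rw [← hGZ, ← htrace]
        refine (trace_transpose_mul_mul_le _ _ _).trans_eq ?_
        rw [hUe, hV]
        simp [Real.sqrt_sq_eq_abs]
    _ ≤ ∑ i, |e i| := mul_le_of_le_one_left (by positivity) hG

end NuclearNorm

section Bathtub

lemma Finset.sum_mul_le_sum_of_threshold {ι : Type*} [Fintype ι] (s : Finset ι) {f w : ι → ℝ}
    {τ : ℝ} (hτ : 0 ≤ τ) (hs : ∀ i ∈ s, τ ≤ f i) (hsc : ∀ i ∉ s, f i ≤ τ)
    (hw0 : ∀ i, 0 ≤ w i) (hw1 : ∀ i, w i ≤ 1) (hw : ∑ i, w i ≤ #s) :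
    ∑ i, f i * w i ≤ ∑ i ∈ s, f i := by
  classical
  have hpt : ∀ i, f i * w i ≤ (if i ∈ s then f i - τ else 0) + τ * w i := fun i => by
    split_ifs with hi
    · nlinarith [hs i hi, hw1 i]
    · nlinarith [hsc i hi, hw0 i]
  calc ∑ i, f i * w i ≤ ∑ i, ((if i ∈ s then f i - τ else 0) + τ * w i) :=
        sum_le_sum fun i _ => hpt i
    _ = ∑ i ∈ s, f i - τ * #s + τ * ∑ i, w i := by
        rw [sum_add_distrib, sum_ite_mem, univ_inter, sum_sub_distrib, mul_sum]
        simp [mul_comm]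
    _ ≤ ∑ i ∈ s, f i := by nlinarith

lemma Fin.sum_mul_le_sum_filter_lt_of_antitone {p r : ℕ} {f w : Fin p → ℝ} (hf0 : ∀ i, 0 ≤ f i)
    (hf : Antitone f) (hw0 : ∀ i, 0 ≤ w i) (hw1 : ∀ i, w i ≤ 1) (hw : ∑ i, w i ≤ r) :
    ∑ i, f i * w i ≤ ∑ i : Fin p with i.val < r, f i := by
  have hwp : ∑ i, w i ≤ p := by
    simpa using sum_le_sum fun i (_ : i ∈ univ) => hw1 i
  have hcard : ∑ i, w i ≤ #{i : Fin p | i.val < r} := by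
    rw [Fin.card_filter_val_lt, Nat.cast_min]; exact le_min hwp hw
  by_cases hrp : r < p
  · refine sum_mul_le_sum_of_threshold _ (hf0 ⟨r, hrp⟩) (fun i hi => hf ?_)
      (fun i hi => hf ?_) hw0 hw1 hcard
    · simp only [mem_filter] at hi; exact Fin.le_def.mpr hi.2.le
    · simp only [mem_filter, not_and, not_lt] at hi; exact Fin.le_def.mpr (hi (mem_univ i))
  · refine sum_mul_le_sum_of_threshold _ le_rfl (fun i _ => hf0 i)
      (fun i hi => absurd ?_ hi) hw0 hw1 hcard
    simp only [mem_filter, mem_univ, true_and]; omega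

end Bathtub

section EckartYoung

variable {m n p : ℕ}

lemma exists_isStarProjection_mul_eq_self_trace_eq_rank (Z : Matrix (Fin m) (Fin n) ℝ) :
    ∃ P : Matrix (Fin n) (Fin n) ℝ, IsStarProjection P ∧ Z * P = Z ∧ trace P = Z.rank := by
  obtain ⟨W, hW, hW', hZW⟩ := exists_orthogonal_transpose_mul_self_mul_eq_diagonal Z
  set μ := (isHermitian_conjTranspose_mul_self Z).eigenvalues
  set χ : Fin n → ℝ := fun i => if μ i ≠ 0 then 1 else 0
  have hχ : diagonal χ * diagonal χ = diagonal χ := by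
    rw [diagonal_mul_diagonal]; congr 1; ext i; by_cases h : μ i ≠ 0 <;> simp [χ, h]
  -- the `i`-th column of `Z * W` has squared norm `μ i`
  have hcol : Z * W * diagonal χ = Z * W := by
    ext k i
    by_cases h : μ i ≠ 0
    · simp [χ, h]
    · have hsq : ∑ l, (Z * W) l i ^ 2 = 0 := by
        rw [← transpose_mul_self_apply_self, hZW, diagonal_apply_eq]; exact not_not.mp h
      have := (sum_eq_zero_iff_of_nonneg fun l _ => sq_nonneg ((Z * W) l i)).mp hsq k
        (mem_univ k)
      simp [χ, pow_eq_zero_iff two_ne_zero |>.mp this]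
  refine ⟨W * diagonal χ * Wᵀ, isStarProjection_iff_transpose.mpr ⟨?_, ?_⟩, ?_, ?_⟩
  · calc W * diagonal χ * Wᵀ * (W * diagonal χ * Wᵀ)
        = W * (diagonal χ * (Wᵀ * W) * diagonal χ) * Wᵀ := by simp only [Matrix.mul_assoc]
      _ = W * diagonal χ * Wᵀ := by rw [hW, Matrix.mul_one, hχ, Matrix.mul_assoc]
  · simp [transpose_mul, Matrix.mul_assoc]
  · rw [← Matrix.mul_assoc, ← Matrix.mul_assoc, hcol, Matrix.mul_assoc, hW', Matrix.mul_one]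
  · rw [trace_mul_cycle, hW, Matrix.one_mul, trace_diagonal, sum_boole,
      ← rank_conjTranspose_mul_self,
      (isHermitian_conjTranspose_mul_self Z).rank_eq_card_non_zero_eigs, Fintype.card_subtype]

lemma sum_sq_le_frobSq_sub_of_rank_le {r : ℕ} {U : Matrix (Fin m) (Fin p) ℝ}
    {V : Matrix (Fin n) (Fin p) ℝ} (hU : Uᵀ * U = 1) (hV : Vᵀ * V = 1) {e : Fin p → ℝ}
    (he0 : ∀ i, 0 ≤ e i) (he : Antitone e) {Z : Matrix (Fin m) (Fin n) ℝ} (hZ : Z.rank ≤ r) :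
    ∑ i : Fin p with r ≤ i.val, e i ^ 2 ≤ frobSq (U * diagonal e * Vᵀ - Z) := by
  obtain ⟨P, hP, hZP, htr⟩ := exists_isStarProjection_mul_eq_self_trace_eq_rank Z
  obtain ⟨hi, hs⟩ := isStarProjection_iff_transpose.mp hP
  set M := U * diagonal e * Vᵀ
  set w : Fin p → ℝ := fun i => ∑ k, (P * V) k i ^ 2
  have hMP : frobSq (M * P) = ∑ i, e i ^ 2 * w i := by
    have : M * P = U * (diagonal e * (P * V)ᵀ) := by
      rw [transpose_mul, hs]; simp only [M, Matrix.mul_assoc]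
    rw [this, frobSq_mul_of_transpose_mul_self_eq_one hU, frobSq_diagonal_mul]
    rfl
  have hw1 : ∀ i, w i ≤ 1 := fun i => by
    have hcol : ∀ k, (P * V) k i = (P *ᵥ fun j => V j i) k := fun k => by
      simp [mul_apply, mulVec, dotProduct]
    have hVi : ∑ j, V j i ^ 2 = 1 := by rw [← transpose_mul_self_apply_self, hV, one_apply_eq]
    have := sum_sq_mulVec_le P fun j => V j i
    rw [hVi, mul_one] at this
    simp only [w, hcol]
    nlinarith [hP.norm_le, norm_nonneg P]
  have hw : ∑ i, w i ≤ r := by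
    calc ∑ i, w i = frobSq (P * V) := by simp only [w, frobSq]; exact sum_comm
      _ ≤ frobSq P * ‖V‖ ^ 2 := frobSq_mul_le _ _
      _ ≤ frobSq P := mul_le_of_le_one_right (frobSq_nonneg _)
          (pow_le_one₀ (norm_nonneg _) (l2_opNorm_le_one_of_transpose_mul_self_eq_one hV))
      _ = Z.rank := by rw [frobSq_eq_trace, hs, hi, htr]
      _ ≤ r := by exact_mod_cast hZ
  have hbathtub := Fin.sum_mul_le_sum_filter_lt_of_antitone (fun i => sq_nonneg (e i))
    (fun i j hij => pow_le_pow_left₀ (he0 j) (he hij) 2) (fun i => by positivity) hw1 hw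
  have hsplit := sum_filter_add_sum_filter_not univ (fun i : Fin p => i.val < r) fun i => e i ^ 2
  simp only [not_lt] at hsplit
  have hMZ : (M - Z) * (1 - P) = M * (1 - P) := by
    rw [Matrix.sub_mul, Matrix.mul_sub Z, Matrix.mul_one, hZP, sub_self, sub_zero]
  calc ∑ i : Fin p with r ≤ i.val, e i ^ 2 ≤ frobSq M - frobSq (M * P) := by
        rw [frobSq_mul_diagonal_mul_transpose hU hV, hMP]; linarith
    _ = frobSq ((M - Z) * (1 - P)) := by rw [hMZ, frobSq_mul_one_sub_of_isStarProjection _ hP]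
    _ ≤ frobSq (M - Z) := by
        rw [frobSq_mul_one_sub_of_isStarProjection _ hP]
        linarith [frobSq_nonneg ((M - Z) * P)]

end EckartYoung

lemma Matrix.submatrix_castLE_mul_diagonal_mul_transpose {R : Type*} [CommSemiring R]
    {m n p r : ℕ} (h : r ≤ p) (U : Matrix (Fin m) (Fin p) R) (V : Matrix (Fin n) (Fin p) R)
    (f : Fin p → R) :
    U.submatrix id (Fin.castLE h) * diagonal (fun i => f (Fin.castLE h i)) *
        (V.submatrix id (Fin.castLE h))ᵀ =
      U * diagonal (fun i => if i.val < r then f i else 0) * Vᵀ := by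
  ext a b
  simp only [mul_apply (M := _ * diagonal _), mul_diagonal, transpose_apply, submatrix_apply,
    id_eq]
  refine Fintype.sum_of_injective _ (Fin.castLE_injective h) _ _ (fun i hi => ?_) fun i => ?_
  · rw [Fin.range_castLE] at hi
    simp [show ¬ i.val < r from hi]
  · simp

section SoftThreshold

variable {m n p : ℕ} {U : Matrix (Fin m) (Fin p) ℝ} {V : Matrix (Fin n) (Fin p) ℝ}

lemma le_half_frobSq_sub_add_mul_nuclearNorm (hU : Uᵀ * U = 1) (hV : Vᵀ * V = 1)
    {σ : Fin p → ℝ} (hσ0 : ∀ i, 0 ≤ σ i) (hσ : Antitone σ) {lam : ℝ} (hlam : 0 ≤ lam) {r : ℕ}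
    {Z : Matrix (Fin m) (Fin n) ℝ} (hZ : Z.rank ≤ r) :
    (∑ i : Fin p with r ≤ i.val, max (σ i - lam) 0 ^ 2) / 2 +
        ∑ i, (min (σ i) lam * σ i - min (σ i) lam ^ 2 / 2) ≤
      (1 / 2) * frobSq (U * diagonal σ * Vᵀ - Z) + lam * nuclearNorm Z := by
  set c : Fin p → ℝ := fun i => min (σ i) lam
  set d : Fin p → ℝ := fun i => max (σ i - lam) 0
  set Y := U * diagonal c * Vᵀ
  have hcd : (fun i => σ i - c i) = d := by
    ext i; rcases le_total (σ i) lam with h | h <;> simp [c, d, h]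
  have hY : ‖Y‖ ≤ lam := (l2_opNorm_mul_diagonal_mul_transpose_le hU hV c).trans <|
    pi_norm_le_iff_of_nonneg hlam |>.mpr fun i => by
      rw [Real.norm_eq_abs, abs_of_nonneg (le_min (hσ0 i) hlam)]; exact min_le_right _ _
  have hdual : trace (Yᵀ * Z) ≤ lam * nuclearNorm Z :=
    (trace_transpose_mul_le_l2_opNorm_mul_nuclearNorm Y Z).trans <|
      mul_le_mul_of_nonneg_right hY (nuclearNorm_nonneg Z)
  have hEY : ∑ i : Fin p with r ≤ i.val, d i ^ 2 ≤ frobSq (U * diagonal d * Vᵀ - Z) :=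
    sum_sq_le_frobSq_sub_of_rank_le hU hV (fun i => le_max_right _ _)
      (fun i j hij => max_le_max (sub_le_sub_right (hσ hij) _) le_rfl) hZ
  have hXY : U * diagonal σ * Vᵀ - Z - Y = U * diagonal d * Vᵀ - Z := by
    rw [sub_right_comm, ← Matrix.sub_mul, ← Matrix.mul_sub, diagonal_sub, hcd]
  have hXZY : trace ((U * diagonal σ * Vᵀ - Z)ᵀ * Y) = ∑ i, σ i * c i - trace (Yᵀ * Z) := by
    rw [transpose_sub, Matrix.sub_mul, trace_sub, trace_transpose_mul_comm Z,
      trace_transpose_mul_diagonal_mul_transpose hU hV]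
  have hsq := frobSq_sub (U * diagonal σ * Vᵀ - Z) Y
  rw [hXY, hXZY, frobSq_mul_diagonal_mul_transpose hU hV] at hsq
  rw [sum_sub_distrib, ← sum_div]
  simp only [c, mul_comm (σ _)] at hsq ⊢
  linarith

lemma half_frobSq_sub_add_mul_nuclearNorm_le (hU : Uᵀ * U = 1) (hV : Vᵀ * V = 1)
    (σ : Fin p → ℝ) {lam : ℝ} (hlam : 0 ≤ lam) (r : ℕ) :
    (1 / 2) * frobSq (U * diagonal σ * Vᵀ -
          U * diagonal (fun i => if i.val < r then max (σ i - lam) 0 else 0) * Vᵀ) +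
        lam * nuclearNorm
          (U * diagonal (fun i => if i.val < r then max (σ i - lam) 0 else 0) * Vᵀ) ≤
      (∑ i : Fin p with r ≤ i.val, max (σ i - lam) 0 ^ 2) / 2 +
        ∑ i, (min (σ i) lam * σ i - min (σ i) lam ^ 2 / 2) := by
  set d : Fin p → ℝ := fun i => if i.val < r then max (σ i - lam) 0 else 0
  have hcoord : ∀ i, (1 / 2) * (σ i - d i) ^ 2 + lam * |d i| =
      (if r ≤ i.val then max (σ i - lam) 0 ^ 2 else 0) / 2 +
        (min (σ i) lam * σ i - min (σ i) lam ^ 2 / 2) := by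
    intro i
    by_cases hi : i.val < r
    · have hi' : ¬ r ≤ i.val := by omega
      rcases le_total (σ i) lam with h | h <;> simp [d, hi, hi', h, abs_of_nonneg] <;> ring
    · have hi' : r ≤ i.val := by omega
      rcases le_total (σ i) lam with h | h <;> simp [d, hi, hi', h] <;> ring
  calc (1 / 2) * frobSq (U * diagonal σ * Vᵀ - U * diagonal d * Vᵀ) +
        lam * nuclearNorm (U * diagonal d * Vᵀ)
      ≤ (1 / 2) * ∑ i, (σ i - d i) ^ 2 + lam * ∑ i, |d i| := by
        rw [← Matrix.sub_mul, ← Matrix.mul_sub, diagonal_sub,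
          frobSq_mul_diagonal_mul_transpose hU hV]
        gcongr
        exact nuclearNorm_mul_diagonal_mul_transpose_le hU hV d
    _ = ∑ i, ((if r ≤ i.val then max (σ i - lam) 0 ^ 2 else 0) / 2 +
          (min (σ i) lam * σ i - min (σ i) lam ^ 2 / 2)) := by
        rw [mul_sum, mul_sum, ← sum_add_distrib]
        exact sum_congr rfl fun i _ => hcoord i
    _ = _ := by rw [sum_add_distrib, ← sum_div, sum_filter]

end SoftThreshold

theorem rank_restricted_soft_svd_general {m n r : ℕ} (hr : r ≤ min m n)
    (X : Matrix (Fin m) (Fin n) ℝ) (lam : ℝ) (hlam : 0 ≤ lam)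
    (U : Matrix (Fin m) (Fin (min m n)) ℝ) (σ : Fin (min m n) → ℝ)
    (V : Matrix (Fin n) (Fin (min m n)) ℝ)
    (hSVD : IsThinSVD X U σ V) :
    -- the rank-r truncated pieces of the SVD
    let Ur : Matrix (Fin m) (Fin r) ℝ := U.submatrix id (Fin.castLE hr)
    let Vr : Matrix (Fin n) (Fin r) ℝ := V.submatrix id (Fin.castLE hr)
    -- Ẑ = U_r S_λ(D_r) V_rᵀ
    let Zhat : Matrix (Fin m) (Fin n) ℝ :=
      Ur * Matrix.diagonal (fun i : Fin r => max (σ (Fin.castLE hr i) - lam) 0) * Vrᵀ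
    Zhat.rank ≤ r ∧
      ∀ Z : Matrix (Fin m) (Fin n) ℝ, Z.rank ≤ r →
        (1 / 2) * frobSq (X - Zhat) + lam * nuclearNorm Zhat ≤
          (1 / 2) * frobSq (X - Z) + lam * nuclearNorm Z := by
  obtain ⟨rfl, hU, hV, hσ0, hσ⟩ := hSVD
  intro Ur Vr Zhat
  have hZhat : Zhat = U * diagonal (fun i => if i.val < r then max (σ i - lam) 0 else 0) * Vᵀ :=
    submatrix_castLE_mul_diagonal_mul_transpose hr U V fun i => max (σ i - lam) 0
  refine ⟨(rank_mul_le_left _ _).trans (rank_mul_le_left _ _ |>.trans (rank_le_width _)),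
    fun Z hZ => ?_⟩
  rw [hZhat]
  exact (half_frobSq_sub_add_mul_nuclearNorm_le hU hV σ hlam r).trans
    (le_half_frobSq_sub_add_mul_nuclearNorm hU hV hσ0 hσ hlam hZ)

theorem rank_restricted_soft_svd {m n r : ℕ} (hr0 : 0 < r) (hr : r ≤ min m n)
    (X : Matrix (Fin m) (Fin n) ℝ) (lam : ℝ) (hlam : 0 ≤ lam)
    (U : Matrix (Fin m) (Fin (min m n)) ℝ) (σ : Fin (min m n) → ℝ)
    (V : Matrix (Fin n) (Fin (min m n)) ℝ)
    (hSVD : IsThinSVD X U σ V) :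
    -- the rank-r truncated pieces of the SVD
    let Ur : Matrix (Fin m) (Fin r) ℝ := U.submatrix id (Fin.castLE hr)
    let Vr : Matrix (Fin n) (Fin r) ℝ := V.submatrix id (Fin.castLE hr)
    -- Ẑ = U_r S_λ(D_r) V_rᵀ
    let Zhat : Matrix (Fin m) (Fin n) ℝ :=
      Ur * Matrix.diagonal (fun i : Fin r => max (σ (Fin.castLE hr i) - lam) 0) * Vrᵀ
    Zhat.rank ≤ r ∧
      ∀ Z : Matrix (Fin m) (Fin n) ℝ, Z.rank ≤ r →
        (1 / 2) * frobSq (X - Zhat) + lam * nuclearNorm Zhat ≤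
          (1 / 2) * frobSq (X - Z) + lam * nuclearNorm Z :=
  rank_restricted_soft_svd_general hr X lam hlam U σ V hSVD

end
end

section
/- Let X and Z be real m×n matrices with singular values σ₁(X) ≥ … ≥ σ_{min(m,n)}(X) and σ₁(Z) ≥ … ≥ σ_{min(m,n)}(Z). Then (1/2)‖X − Z‖_F² ≥ (1/2)∑_{i=1}^{min(m,n)} (σ_i(X) − σ_i(Z))², and consequently for any λ ≥ 0, (1/2)‖X − Z‖_F² + λ‖Z‖_* ≥ (1/2)∑_i (σ_i(X) − σ_i(Z))² + λ∑_i σ_i(Z). -/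
noncomputable section

open Matrix

/- ### Auxiliary lemmas -/

lemma aux_tele (A : ℕ → ℝ) (p i : ℕ) (hip : i < p) (hAp : A p = 0) :
    A i = ∑ k ∈ Finset.range p, (if i ≤ k then A k - A (k+1) else 0) := by
  have hf : (Finset.range p).filter (fun k => i ≤ k) = Finset.Ico i p := by
    ext k; simp only [Finset.mem_filter, Finset.mem_range, Finset.mem_Ico]; omega
  rw [← Finset.sum_filter, hf, Finset.sum_Ico_eq_sum_range]
  have h2 : ∀ k, A (i + k) - A (i + k + 1) = A (i + k) - A (i + (k + 1)) := by
    intro k; rw [Nat.add_assoc]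
  calc A i = A (i + 0) - A (i + (p - i)) := by
        rw [Nat.add_zero, Nat.add_sub_cancel' hip.le, hAp, sub_zero]
    _ = ∑ k ∈ Finset.range (p - i), (A (i + k) - A (i + (k+1))) := by
        rw [← Finset.sum_range_sub' (fun k => A (i + k)) (p - i)]
    _ = _ := by exact Finset.sum_congr rfl (fun k _ => (h2 k).symm)

lemma aux_quad_swap {ι₁ ι₂ ι₃ ι₄ : Type*} (s : Finset ι₁) (t : Finset ι₂) (u : Finset ι₃)
    (v : Finset ι₄) (f : ι₁ → ι₂ → ι₃ → ι₄ → ℝ) :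
    (∑ i ∈ s, ∑ j ∈ t, ∑ k ∈ u, ∑ l ∈ v, f i j k l)
      = ∑ k ∈ u, ∑ l ∈ v, ∑ i ∈ s, ∑ j ∈ t, f i j k l := by
  calc ∑ i ∈ s, ∑ j ∈ t, ∑ k ∈ u, ∑ l ∈ v, f i j k l
      = ∑ i ∈ s, ∑ k ∈ u, ∑ j ∈ t, ∑ l ∈ v, f i j k l :=
        Finset.sum_congr rfl (fun i _ => Finset.sum_comm)
    _ = ∑ k ∈ u, ∑ i ∈ s, ∑ j ∈ t, ∑ l ∈ v, f i j k l := Finset.sum_comm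
    _ = ∑ k ∈ u, ∑ i ∈ s, ∑ l ∈ v, ∑ j ∈ t, f i j k l :=
        Finset.sum_congr rfl (fun k _ => Finset.sum_congr rfl (fun i _ => Finset.sum_comm))
    _ = ∑ k ∈ u, ∑ l ∈ v, ∑ i ∈ s, ∑ j ∈ t, f i j k l :=
        Finset.sum_congr rfl (fun k _ => Finset.sum_comm)

/-- Rearrangement bound for doubly substochastic weights against products of
two nonincreasing nonnegative sequences. -/
lemma aux_key (p : ℕ) (A B : ℕ → ℝ) (S : ℕ → ℕ → ℝ)
    (hAanti : ∀ k, A (k+1) ≤ A k) (hAp : A p = 0)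
    (hBanti : ∀ k, B (k+1) ≤ B k) (hBp : B p = 0)
    (hS0 : ∀ i j, 0 ≤ S i j)
    (hrow : ∀ i, i < p → ∑ j ∈ Finset.range p, S i j ≤ 1)
    (hcol : ∀ j, j < p → ∑ i ∈ Finset.range p, S i j ≤ 1) :
    ∑ i ∈ Finset.range p, ∑ j ∈ Finset.range p, A i * B j * S i j
      ≤ ∑ i ∈ Finset.range p, A i * B i := by
  set α : ℕ → ℝ := fun k => A k - A (k+1) with hα
  set β : ℕ → ℝ := fun k => B k - B (k+1) with hβ
  have hα0 : ∀ k, 0 ≤ α k := fun k => sub_nonneg.2 (hAanti k)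
  have hβ0 : ∀ k, 0 ≤ β k := fun k => sub_nonneg.2 (hBanti k)
  set T : ℕ → ℕ → ℝ := fun k l =>
    ∑ i ∈ Finset.range p, ∑ j ∈ Finset.range p,
      ((if i ≤ k then (1:ℝ) else 0) * (if j ≤ l then (1:ℝ) else 0)) * S i j with hT
  have factor : ∀ k l, ∑ i ∈ Finset.range p, ∑ j ∈ Finset.range p,
      α k * β l * (((if i ≤ k then (1:ℝ) else 0) * (if j ≤ l then (1:ℝ) else 0)) * S i j)
      = α k * β l * T k l := by
    intro k l
    simp only [hT, Finset.mul_sum]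
  have hLHS : ∑ i ∈ Finset.range p, ∑ j ∈ Finset.range p, A i * B j * S i j
      = ∑ k ∈ Finset.range p, ∑ l ∈ Finset.range p, α k * β l * T k l := by
    have step1 : ∀ i ∈ Finset.range p, ∀ j ∈ Finset.range p,
        A i * B j * S i j = ∑ k ∈ Finset.range p, ∑ l ∈ Finset.range p,
          α k * β l * (((if i ≤ k then (1:ℝ) else 0) * (if j ≤ l then (1:ℝ) else 0)) * S i j) := by
      intro i hi j hj
      rw [Finset.mem_range] at hi hj
      rw [aux_tele A p i hi hAp, aux_tele B p j hj hBp, Finset.sum_mul_sum, Finset.sum_mul]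
      refine Finset.sum_congr rfl (fun k _ => ?_)
      rw [Finset.sum_mul]
      refine Finset.sum_congr rfl (fun l _ => ?_)
      simp only [hα, hβ]
      split_ifs <;> ring
    calc ∑ i ∈ Finset.range p, ∑ j ∈ Finset.range p, A i * B j * S i j
        = ∑ i ∈ Finset.range p, ∑ j ∈ Finset.range p, ∑ k ∈ Finset.range p,
            ∑ l ∈ Finset.range p,
            α k * β l * (((if i ≤ k then (1:ℝ) else 0) * (if j ≤ l then (1:ℝ) else 0)) * S i j) :=
          Finset.sum_congr rfl (fun i hi => Finset.sum_congr rfl (fun j hj => step1 i hi j hj))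
      _ = ∑ k ∈ Finset.range p, ∑ l ∈ Finset.range p, ∑ i ∈ Finset.range p,
            ∑ j ∈ Finset.range p,
            α k * β l * (((if i ≤ k then (1:ℝ) else 0) * (if j ≤ l then (1:ℝ) else 0)) * S i j) :=
          aux_quad_swap _ _ _ _ _
      _ = _ := Finset.sum_congr rfl (fun k _ => Finset.sum_congr rfl (fun l _ => factor k l))
  have hTbound : ∀ k ∈ Finset.range p, ∀ l ∈ Finset.range p, T k l ≤ ((min k l : ℕ) : ℝ) + 1 := by
    intro k hk l hl
    rw [Finset.mem_range] at hk hl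
    have hb : ∀ a b : ℕ, b < p → T a b ≤ (a : ℝ) + 1 := by
      intro a b hbp
      have h1 : T a b ≤ ∑ i ∈ Finset.range p, (if i ≤ a then (1:ℝ) else 0) := by
        simp only [hT]
        refine Finset.sum_le_sum (fun i hi => ?_)
        rw [Finset.mem_range] at hi
        have inner : ∑ j ∈ Finset.range p,
            ((if i ≤ a then (1:ℝ) else 0) * (if j ≤ b then (1:ℝ) else 0)) * S i j
            ≤ (if i ≤ a then (1:ℝ) else 0) * ∑ j ∈ Finset.range p, S i j := by
          rw [Finset.mul_sum]
          refine Finset.sum_le_sum (fun j hj => ?_)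
          split_ifs <;> simp [hS0 i j]
        calc ∑ j ∈ Finset.range p,
            ((if i ≤ a then (1:ℝ) else 0) * (if j ≤ b then (1:ℝ) else 0)) * S i j
            ≤ (if i ≤ a then (1:ℝ) else 0) * ∑ j ∈ Finset.range p, S i j := inner
          _ ≤ (if i ≤ a then (1:ℝ) else 0) * 1 := by
              refine mul_le_mul_of_nonneg_left (hrow i hi) ?_
              split_ifs <;> norm_num
          _ = (if i ≤ a then (1:ℝ) else 0) := mul_one _
      have h2 : ∑ i ∈ Finset.range p, (if i ≤ a then (1:ℝ) else 0) ≤ (a:ℝ) + 1 := by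
        rw [Finset.sum_boole]
        have hsub : (Finset.range p).filter (fun i => i ≤ a) ⊆ Finset.range (a+1) := by
          intro x; simp only [Finset.mem_filter, Finset.mem_range]; omega
        have := Finset.card_le_card hsub
        rw [Finset.card_range] at this
        exact_mod_cast this
      linarith
    have hb' : ∀ a b : ℕ, b < p → T b a ≤ (a : ℝ) + 1 := by
      intro a b hbp
      have hswap : T b a = ∑ j ∈ Finset.range p, ∑ i ∈ Finset.range p,
          ((if i ≤ b then (1:ℝ) else 0) * (if j ≤ a then (1:ℝ) else 0)) * S i j := by
        simp only [hT]; exact Finset.sum_comm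
      rw [hswap]
      have h1 : ∑ j ∈ Finset.range p, ∑ i ∈ Finset.range p,
          ((if i ≤ b then (1:ℝ) else 0) * (if j ≤ a then (1:ℝ) else 0)) * S i j
          ≤ ∑ j ∈ Finset.range p, (if j ≤ a then (1:ℝ) else 0) := by
        refine Finset.sum_le_sum (fun j hj => ?_)
        rw [Finset.mem_range] at hj
        have inner : ∑ i ∈ Finset.range p,
            ((if i ≤ b then (1:ℝ) else 0) * (if j ≤ a then (1:ℝ) else 0)) * S i j
            ≤ (if j ≤ a then (1:ℝ) else 0) * ∑ i ∈ Finset.range p, S i j := by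
          rw [Finset.mul_sum]
          refine Finset.sum_le_sum (fun i hi => ?_)
          split_ifs <;> simp [hS0 i j]
        calc ∑ i ∈ Finset.range p,
            ((if i ≤ b then (1:ℝ) else 0) * (if j ≤ a then (1:ℝ) else 0)) * S i j
            ≤ (if j ≤ a then (1:ℝ) else 0) * ∑ i ∈ Finset.range p, S i j := inner
          _ ≤ (if j ≤ a then (1:ℝ) else 0) * 1 := by
              refine mul_le_mul_of_nonneg_left (hcol j hj) ?_
              split_ifs <;> norm_num
          _ = (if j ≤ a then (1:ℝ) else 0) := mul_one _
      have h2 : ∑ j ∈ Finset.range p, (if j ≤ a then (1:ℝ) else 0) ≤ (a:ℝ) + 1 := by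
        rw [Finset.sum_boole]
        have hsub : (Finset.range p).filter (fun i => i ≤ a) ⊆ Finset.range (a+1) := by
          intro x; simp only [Finset.mem_filter, Finset.mem_range]; omega
        have := Finset.card_le_card hsub
        rw [Finset.card_range] at this
        exact_mod_cast this
      linarith
    rcases le_total k l with h | h
    · rw [min_eq_left h]; exact hb k l hl
    · rw [min_eq_right h]; exact hb' l k hk
  have hRHS : ∑ i ∈ Finset.range p, A i * B i
      = ∑ k ∈ Finset.range p, ∑ l ∈ Finset.range p, α k * β l * (((min k l : ℕ) : ℝ) + 1) := by
    have count : ∀ k ∈ Finset.range p, ∀ l ∈ Finset.range p,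
        ∑ i ∈ Finset.range p, ((if i ≤ k then (1:ℝ) else 0) * (if i ≤ l then (1:ℝ) else 0))
          = ((min k l : ℕ) : ℝ) + 1 := by
      intro k hk l hl
      rw [Finset.mem_range] at hk hl
      have hind : ∀ i, ((if i ≤ k then (1:ℝ) else 0) * (if i ≤ l then (1:ℝ) else 0))
          = (if i ≤ min k l then (1:ℝ) else 0) := by
        intro i; split_ifs with h1 h2 h3 <;> first | (exfalso; omega) | ring
      simp only [hind]
      rw [Finset.sum_boole]
      have hf : (Finset.range p).filter (fun i => i ≤ min k l) = Finset.range (min k l + 1) := by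
        ext x; simp only [Finset.mem_filter, Finset.mem_range]; omega
      rw [hf, Finset.card_range]
      push_cast; ring
    have step1 : ∀ i ∈ Finset.range p, A i * B i
        = ∑ k ∈ Finset.range p, ∑ l ∈ Finset.range p,
            α k * β l * ((if i ≤ k then (1:ℝ) else 0) * (if i ≤ l then (1:ℝ) else 0)) := by
      intro i hi
      rw [Finset.mem_range] at hi
      rw [aux_tele A p i hi hAp, aux_tele B p i hi hBp, Finset.sum_mul_sum]
      refine Finset.sum_congr rfl (fun k _ => Finset.sum_congr rfl (fun l _ => ?_))
      simp only [hα, hβ]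
      split_ifs <;> ring
    calc ∑ i ∈ Finset.range p, A i * B i
        = ∑ i ∈ Finset.range p, ∑ k ∈ Finset.range p, ∑ l ∈ Finset.range p,
            α k * β l * ((if i ≤ k then (1:ℝ) else 0) * (if i ≤ l then (1:ℝ) else 0)) :=
          Finset.sum_congr rfl step1
      _ = ∑ k ∈ Finset.range p, ∑ i ∈ Finset.range p, ∑ l ∈ Finset.range p,
            α k * β l * ((if i ≤ k then (1:ℝ) else 0) * (if i ≤ l then (1:ℝ) else 0)) :=
          Finset.sum_comm
      _ = ∑ k ∈ Finset.range p, ∑ l ∈ Finset.range p, ∑ i ∈ Finset.range p,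
            α k * β l * ((if i ≤ k then (1:ℝ) else 0) * (if i ≤ l then (1:ℝ) else 0)) :=
          Finset.sum_congr rfl (fun k _ => Finset.sum_comm)
      _ = ∑ k ∈ Finset.range p, ∑ l ∈ Finset.range p, α k * β l * (((min k l : ℕ) : ℝ) + 1) := by
          refine Finset.sum_congr rfl (fun k hk => Finset.sum_congr rfl (fun l hl => ?_))
          rw [← Finset.mul_sum, count k hk l hl]
  rw [hLHS, hRHS]
  refine Finset.sum_le_sum (fun k hk => Finset.sum_le_sum (fun l hl => ?_))
  exact mul_le_mul_of_nonneg_left (hTbound k hk l hl) (mul_nonneg (hα0 k) (hβ0 l))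

/-- Applying a matrix with orthonormal columns (transposed) can only shrink the
(squared) Euclidean norm. -/
lemma aux_contraction {m p : ℕ} (U : Matrix (Fin m) (Fin p) ℝ) (hU : Uᵀ * U = 1)
    (x : Fin m → ℝ) :
    ∑ j, (∑ k, x k * U k j)^2 ≤ ∑ k, (x k)^2 := by
  set y : Fin p → ℝ := Matrix.vecMul x U with hy
  have hyj : ∀ j, y j = ∑ k, x k * U k j := by
    intro j; simp [hy, Matrix.vecMul, dotProduct]
  set w : Fin m → ℝ := U.mulVec y with hw
  have h1 : dotProduct w w = dotProduct y y := by
    rw [hw, Matrix.dotProduct_mulVec]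
    congr 1
    rw [show U.mulVec y = Matrix.vecMul y Uᵀ from (Matrix.vecMul_transpose U y).symm,
      Matrix.vecMul_vecMul, hU, Matrix.vecMul_one]
  have h2 : dotProduct y y = dotProduct x w := by
    rw [hw, Matrix.dotProduct_mulVec, hy]
  have hcs : (dotProduct x w)^2 ≤ (∑ k, (x k)^2) * (∑ k, (w k)^2) := by
    have := Finset.sum_mul_sq_le_sq_mul_sq Finset.univ x w
    simpa [dotProduct] using this
  have hyy : dotProduct y y = ∑ j, (y j)^2 := by
    simp [dotProduct, sq]
  have hww : dotProduct w w = ∑ k, (w k)^2 := by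
    simp [dotProduct, sq]
  have hgoal : ∑ j, (∑ k, x k * U k j)^2 = ∑ j, (y j)^2 :=
    Finset.sum_congr rfl (fun j _ => by rw [hyj j])
  rw [hgoal]
  have hynn : 0 ≤ ∑ j, (y j)^2 := Finset.sum_nonneg (fun j _ => sq_nonneg _)
  have hxnn : 0 ≤ ∑ k, (x k)^2 := Finset.sum_nonneg (fun k _ => sq_nonneg _)
  have hkey : (∑ j, (y j)^2)^2 ≤ (∑ k, (x k)^2) * (∑ j, (y j)^2) := by
    calc (∑ j, (y j)^2)^2 = (dotProduct x w)^2 := by rw [← hyy, h2]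
      _ ≤ (∑ k, (x k)^2) * (∑ k, (w k)^2) := hcs
      _ = (∑ k, (x k)^2) * (∑ j, (y j)^2) := by rw [← hww, h1, hyy]
  rcases eq_or_lt_of_le hynn with h | h
  · linarith
  · nlinarith

lemma aux_svd_entry {m n p : ℕ} (U : Matrix (Fin m) (Fin p) ℝ) (s : Fin p → ℝ)
    (V : Matrix (Fin n) (Fin p) ℝ) (i : Fin m) (j : Fin n) :
    (U * Matrix.diagonal s * Vᵀ) i j = ∑ k, U i k * s k * V j k := by
  rw [Matrix.mul_apply]
  refine Finset.sum_congr rfl (fun k _ => ?_)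
  rw [Matrix.mul_diagonal, Matrix.transpose_apply]

lemma aux_cross {m n p : ℕ} (U1 U2 : Matrix (Fin m) (Fin p) ℝ) (V1 V2 : Matrix (Fin n) (Fin p) ℝ)
    (s1 s2 : Fin p → ℝ) :
    ∑ i, ∑ j, (U1 * Matrix.diagonal s1 * V1ᵀ) i j * (U2 * Matrix.diagonal s2 * V2ᵀ) i j
      = ∑ k, ∑ l, s1 k * s2 l * ((U1ᵀ * U2) k l * (V1ᵀ * V2) k l) := by
  calc ∑ i, ∑ j, (U1 * Matrix.diagonal s1 * V1ᵀ) i j * (U2 * Matrix.diagonal s2 * V2ᵀ) i j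
      = ∑ i, ∑ j, ∑ k, ∑ l,
          (s1 k * s2 l) * ((U1 i k * U2 i l) * (V1 j k * V2 j l)) := by
        refine Finset.sum_congr rfl (fun i _ => Finset.sum_congr rfl (fun j _ => ?_))
        rw [aux_svd_entry, aux_svd_entry, Finset.sum_mul_sum]
        refine Finset.sum_congr rfl (fun k _ => Finset.sum_congr rfl (fun l _ => by ring))
    _ = ∑ k, ∑ l, ∑ i, ∑ j,
          (s1 k * s2 l) * ((U1 i k * U2 i l) * (V1 j k * V2 j l)) := aux_quad_swap _ _ _ _ _
    _ = ∑ k, ∑ l, s1 k * s2 l * ((U1ᵀ * U2) k l * (V1ᵀ * V2) k l) := by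
        refine Finset.sum_congr rfl (fun k _ => Finset.sum_congr rfl (fun l _ => ?_))
        have hU : (U1ᵀ * U2) k l = ∑ i, U1 i k * U2 i l := by
          rw [Matrix.mul_apply]; exact Finset.sum_congr rfl (fun i _ => rfl)
        have hV : (V1ᵀ * V2) k l = ∑ j, V1 j k * V2 j l := by
          rw [Matrix.mul_apply]; exact Finset.sum_congr rfl (fun j _ => rfl)
        rw [hU, hV]
        rw [show ∀ c : ℝ, ∀ F : Fin m → ℝ, ∀ G : Fin n → ℝ,
          (∑ i, ∑ j, c * (F i * G j)) = c * ((∑ i, F i) * (∑ j, G j)) from ?_]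
        · intro c F G
          rw [Finset.sum_mul_sum, Finset.mul_sum]
          exact Finset.sum_congr rfl (fun i _ => by rw [Finset.mul_sum])

theorem frob_ge_singular_value_dist {m n : ℕ} (X Z : Matrix (Fin m) (Fin n) ℝ)
    (UX : Matrix (Fin m) (Fin (min m n)) ℝ) (σX : Fin (min m n) → ℝ)
    (VX : Matrix (Fin n) (Fin (min m n)) ℝ)
    (UZ : Matrix (Fin m) (Fin (min m n)) ℝ) (σZ : Fin (min m n) → ℝ)
    (VZ : Matrix (Fin n) (Fin (min m n)) ℝ)
    (hX : IsThinSVD X UX σX VX) (hZ : IsThinSVD Z UZ σZ VZ) :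
    (1 / 2) * frobSq (X - Z) ≥ (1 / 2) * ∑ i, (σX i - σZ i) ^ 2 ∧
      ∀ lam : ℝ, 0 ≤ lam →
        (1 / 2) * frobSq (X - Z) + lam * (∑ i, σZ i) ≥
          (1 / 2) * ∑ i, (σX i - σZ i) ^ 2 + lam * ∑ i, σZ i := by
  obtain ⟨hXeq, hXU, hXV, hX0, hXanti⟩ := hX
  obtain ⟨hZeq, hZU, hZV, hZ0, hZanti⟩ := hZ
  set C : Matrix (Fin (min m n)) (Fin (min m n)) ℝ := UXᵀ * UZ with hC
  set D : Matrix (Fin (min m n)) (Fin (min m n)) ℝ := VXᵀ * VZ with hD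
  have hdiagsum : ∀ (s1 s2 : Fin (min m n) → ℝ),
      (∑ k, ∑ l, s1 k * s2 l * ((1 : Matrix (Fin (min m n)) (Fin (min m n)) ℝ) k l
        * (1 : Matrix (Fin (min m n)) (Fin (min m n)) ℝ) k l)) = ∑ k, s1 k * s2 k := by
    intro s1 s2
    refine Finset.sum_congr rfl (fun k _ => ?_)
    rw [Finset.sum_eq_single k]
    · simp [Matrix.one_apply]
    · intro l _ hlk
      simp [Matrix.one_apply, Ne.symm hlk]
    · simp
  have hfX : frobSq X = ∑ k, σX k ^ 2 := by
    have h1 : frobSq X = ∑ i, ∑ j, X i j * X i j := by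
      simp [frobSq, sq]
    rw [h1, hXeq, aux_cross, hXU, hXV, hdiagsum]
    exact Finset.sum_congr rfl (fun k _ => (sq (σX k)).symm)
  have hfZ : frobSq Z = ∑ k, σZ k ^ 2 := by
    have h1 : frobSq Z = ∑ i, ∑ j, Z i j * Z i j := by
      simp [frobSq, sq]
    rw [h1, hZeq, aux_cross, hZU, hZV, hdiagsum]
    exact Finset.sum_congr rfl (fun k _ => (sq (σZ k)).symm)
  have hcrossXZ : (∑ i, ∑ j, X i j * Z i j) = ∑ k, ∑ l, σX k * σZ l * (C k l * D k l) := by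
    rw [hXeq, hZeq, aux_cross]
  have hexpand : frobSq (X - Z)
      = frobSq X + frobSq Z - 2 * ∑ i, ∑ j, X i j * Z i j := by
    simp only [frobSq, Matrix.sub_apply]
    have h : ∀ i : Fin m, ∑ j, (X i j - Z i j)^2
        = (∑ j, (X i j)^2 + ∑ j, (Z i j)^2) - 2 * ∑ j, X i j * Z i j := by
      intro i
      rw [Finset.mul_sum, ← Finset.sum_add_distrib, ← Finset.sum_sub_distrib]
      exact Finset.sum_congr rfl (fun j _ => by ring)
    calc ∑ i, ∑ j, (X i j - Z i j)^2
        = ∑ i, ((∑ j, (X i j)^2 + ∑ j, (Z i j)^2) - 2 * ∑ j, X i j * Z i j) :=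
          Finset.sum_congr rfl (fun i _ => h i)
      _ = _ := by
          rw [Finset.sum_sub_distrib, Finset.sum_add_distrib, ← Finset.mul_sum]
  have hab : (∑ i, (σX i - σZ i)^2)
      = (∑ i, σX i ^2 + ∑ i, σZ i ^2) - 2 * ∑ i, σX i * σZ i := by
    rw [Finset.mul_sum, ← Finset.sum_add_distrib, ← Finset.sum_sub_distrib]
    exact Finset.sum_congr rfl (fun i _ => by ring)
  have main : (∑ k, ∑ l, σX k * σZ l * (C k l * D k l)) ≤ ∑ k, σX k * σZ k := by
    set S : Fin (min m n) → Fin (min m n) → ℝ := fun k l => ((C k l)^2 + (D k l)^2)/2 with hS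
    have h1 : (∑ k, ∑ l, σX k * σZ l * (C k l * D k l))
        ≤ ∑ k, ∑ l, σX k * σZ l * S k l := by
      refine Finset.sum_le_sum (fun k _ => Finset.sum_le_sum (fun l _ => ?_))
      refine mul_le_mul_of_nonneg_left ?_ (mul_nonneg (hX0 k) (hZ0 l))
      simp only [hS]
      nlinarith [sq_nonneg (C k l - D k l)]
    have hxrowC : ∀ k : Fin (min m n), ∑ l, (C k l)^2 ≤ 1 := by
      intro k
      have hnorm : ∑ t, (UX t k)^2 = 1 := by
        have := congrArg (fun M => M k k) hXU
        simp only [Matrix.mul_apply, Matrix.transpose_apply, Matrix.one_apply_eq] at this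
        rw [← this]
        exact Finset.sum_congr rfl (fun t _ => by rw [sq])
      have hcon := aux_contraction UZ hZU (fun t => UX t k)
      rw [hnorm] at hcon
      refine le_trans (le_of_eq ?_) hcon
      refine Finset.sum_congr rfl (fun l _ => ?_)
      congr 1
    have hxcolC : ∀ l : Fin (min m n), ∑ k, (C k l)^2 ≤ 1 := by
      intro l
      have hnorm : ∑ t, (UZ t l)^2 = 1 := by
        have := congrArg (fun M => M l l) hZU
        simp only [Matrix.mul_apply, Matrix.transpose_apply, Matrix.one_apply_eq] at this
        rw [← this]
        exact Finset.sum_congr rfl (fun t _ => by rw [sq])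
      have hcon := aux_contraction UX hXU (fun t => UZ t l)
      rw [hnorm] at hcon
      refine le_trans (le_of_eq ?_) hcon
      refine Finset.sum_congr rfl (fun k _ => ?_)
      congr 1
      rw [hC, Matrix.mul_apply]
      exact Finset.sum_congr rfl (fun t _ => by rw [Matrix.transpose_apply]; ring)
    have hxrowD : ∀ k : Fin (min m n), ∑ l, (D k l)^2 ≤ 1 := by
      intro k
      have hnorm : ∑ t, (VX t k)^2 = 1 := by
        have := congrArg (fun M => M k k) hXV
        simp only [Matrix.mul_apply, Matrix.transpose_apply, Matrix.one_apply_eq] at this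
        rw [← this]
        exact Finset.sum_congr rfl (fun t _ => by rw [sq])
      have hcon := aux_contraction VZ hZV (fun t => VX t k)
      rw [hnorm] at hcon
      refine le_trans (le_of_eq ?_) hcon
      refine Finset.sum_congr rfl (fun l _ => ?_)
      congr 1
    have hxcolD : ∀ l : Fin (min m n), ∑ k, (D k l)^2 ≤ 1 := by
      intro l
      have hnorm : ∑ t, (VZ t l)^2 = 1 := by
        have := congrArg (fun M => M l l) hZV
        simp only [Matrix.mul_apply, Matrix.transpose_apply, Matrix.one_apply_eq] at this
        rw [← this]
        exact Finset.sum_congr rfl (fun t _ => by rw [sq])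
      have hcon := aux_contraction VX hXV (fun t => VZ t l)
      rw [hnorm] at hcon
      refine le_trans (le_of_eq ?_) hcon
      refine Finset.sum_congr rfl (fun k _ => ?_)
      congr 1
      rw [hD, Matrix.mul_apply]
      exact Finset.sum_congr rfl (fun t _ => by rw [Matrix.transpose_apply]; ring)
    set A : ℕ → ℝ := fun i => if h : i < min m n then σX ⟨i, h⟩ else 0 with hA
    set B : ℕ → ℝ := fun i => if h : i < min m n then σZ ⟨i, h⟩ else 0 with hB
    set Se : ℕ → ℕ → ℝ := fun i j =>
      if h : i < min m n ∧ j < min m n then S ⟨i, h.1⟩ ⟨j, h.2⟩ else 0 with hSe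
    have hAanti : ∀ k, A (k+1) ≤ A k := by
      intro k
      simp only [hA]
      by_cases h1 : k + 1 < min m n
      · rw [dif_pos h1, dif_pos (Nat.lt_of_succ_lt h1)]
        exact hXanti (Fin.mk_le_mk.mpr (Nat.le_succ k))
      · rw [dif_neg h1]
        by_cases h2 : k < min m n
        · rw [dif_pos h2]; exact hX0 _
        · rw [dif_neg h2]
    have hBanti : ∀ k, B (k+1) ≤ B k := by
      intro k
      simp only [hB]
      by_cases h1 : k + 1 < min m n
      · rw [dif_pos h1, dif_pos (Nat.lt_of_succ_lt h1)]
        exact hZanti (Fin.mk_le_mk.mpr (Nat.le_succ k))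
      · rw [dif_neg h1]
        by_cases h2 : k < min m n
        · rw [dif_pos h2]; exact hZ0 _
        · rw [dif_neg h2]
    have hAp : A (min m n) = 0 := by simp only [hA]; rw [dif_neg (lt_irrefl _)]
    have hBp : B (min m n) = 0 := by simp only [hB]; rw [dif_neg (lt_irrefl _)]
    have hS0' : ∀ i j, 0 ≤ Se i j := by
      intro i j
      simp only [hSe]
      split_ifs with h
      · simp only [hS]; positivity
      · exact le_refl 0
    have hrow : ∀ i, i < min m n → ∑ j ∈ Finset.range (min m n), Se i j ≤ 1 := by
      intro i hi
      have hconv : (∑ j ∈ Finset.range (min m n), Se i j) = ∑ l : Fin (min m n), S ⟨i, hi⟩ l := by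
        rw [← Fin.sum_univ_eq_sum_range (fun j => Se i j) (min m n)]
        refine Finset.sum_congr rfl (fun l _ => ?_)
        simp only [hSe]
        rw [dif_pos ⟨hi, l.isLt⟩]
      rw [hconv]
      have hsum : (∑ l : Fin (min m n), S ⟨i, hi⟩ l)
          = ((∑ l, (C ⟨i, hi⟩ l)^2) + (∑ l, (D ⟨i, hi⟩ l)^2))/2 := by
        simp only [hS]
        rw [← Finset.sum_add_distrib, ← Finset.sum_div]
      rw [hsum]
      have h1 := hxrowC ⟨i, hi⟩
      have h2 := hxrowD ⟨i, hi⟩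
      linarith
    have hcol : ∀ j, j < min m n → ∑ i ∈ Finset.range (min m n), Se i j ≤ 1 := by
      intro j hj
      have hconv : (∑ i ∈ Finset.range (min m n), Se i j) = ∑ k : Fin (min m n), S k ⟨j, hj⟩ := by
        rw [← Fin.sum_univ_eq_sum_range (fun i => Se i j) (min m n)]
        refine Finset.sum_congr rfl (fun k _ => ?_)
        simp only [hSe]
        rw [dif_pos ⟨k.isLt, hj⟩]
      rw [hconv]
      have hsum : (∑ k : Fin (min m n), S k ⟨j, hj⟩)
          = ((∑ k, (C k ⟨j, hj⟩)^2) + (∑ k, (D k ⟨j, hj⟩)^2))/2 := by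
        simp only [hS]
        rw [← Finset.sum_add_distrib, ← Finset.sum_div]
      rw [hsum]
      have h1 := hxcolC ⟨j, hj⟩
      have h2 := hxcolD ⟨j, hj⟩
      linarith
    have hAval : ∀ k : Fin (min m n), A ↑k = σX k := by
      intro k
      simp only [hA]
      rw [dif_pos k.isLt]
    have hBval : ∀ k : Fin (min m n), B ↑k = σZ k := by
      intro k
      simp only [hB]
      rw [dif_pos k.isLt]
    have hSval : ∀ k l : Fin (min m n), Se ↑k ↑l = S k l := by
      intro k l
      simp only [hSe]
      rw [dif_pos ⟨k.isLt, l.isLt⟩]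
    have hklem := aux_key (min m n) A B Se hAanti hAp hBanti hBp hS0' hrow hcol
    have hLHSconv : (∑ k, ∑ l, σX k * σZ l * S k l)
        = ∑ i ∈ Finset.range (min m n), ∑ j ∈ Finset.range (min m n), A i * B j * Se i j := by
      rw [← Fin.sum_univ_eq_sum_range
        (fun i => ∑ j ∈ Finset.range (min m n), A i * B j * Se i j) (min m n)]
      refine Finset.sum_congr rfl (fun k _ => ?_)
      rw [← Fin.sum_univ_eq_sum_range (fun j => A ↑k * B j * Se ↑k j) (min m n)]
      refine Finset.sum_congr rfl (fun l _ => ?_)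
      rw [hAval k, hBval l, hSval k l]
    have hRHSconv : (∑ k, σX k * σZ k) = ∑ i ∈ Finset.range (min m n), A i * B i := by
      rw [← Fin.sum_univ_eq_sum_range (fun i => A i * B i) (min m n)]
      refine Finset.sum_congr rfl (fun k _ => ?_)
      rw [hAval k, hBval k]
    calc (∑ k, ∑ l, σX k * σZ l * (C k l * D k l))
        ≤ ∑ k, ∑ l, σX k * σZ l * S k l := h1
      _ = ∑ i ∈ Finset.range (min m n), ∑ j ∈ Finset.range (min m n), A i * B j * Se i j :=
          hLHSconv
      _ ≤ ∑ i ∈ Finset.range (min m n), A i * B i := hklem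
      _ = ∑ k, σX k * σZ k := hRHSconv.symm
  have goal1 : (1 / 2) * frobSq (X - Z) ≥ (1 / 2) * ∑ i, (σX i - σZ i) ^ 2 := by
    rw [hexpand, hfX, hfZ, hcrossXZ, hab]
    linarith
  refine ⟨goal1, fun lam hlam => ?_⟩
  linarith

end
end

section
/- Let X and Z be real m×n matrices. Then the trace inner product satisfies ⟨X, Z⟩ := trace(XᵀZ) ≤ ∑_{i=1}^{min(m,n)} σ_i(X) σ_i(Z), where σ_i(X) and σ_i(Z) denote the singular values of X and Z listed in decreasing order (the von Neumann trace inequality). -/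
/-!
Writing `X = U_X Σ_X V_Xᵀ` and `Z = U_Z Σ_Z V_Zᵀ`, cyclicity of the trace gives
`trace (Xᵀ Z) = ∑ i j, σ_i(X) σ_j(Z) A i j B j i` with `A = U_Xᵀ U_Z` and `B = V_Zᵀ V_X`.
By Bessel's inequality every row and column of `A` and of `B` has squared norm at most `1`, so by
AM-GM the weights `(A i j ^ 2 + B j i ^ 2) / 2` form a doubly substochastic matrix. For decreasing
nonnegative `a`, `b` the bilinear form `∑ i j, a i b j S i j` over doubly substochastic `S` is
maximal at `S = 1`: summation by parts in both indices reduces this to the sums of `S` over the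
corner blocks `[0, k] × [0, l]`, which are at most `min (k + 1) (l + 1)`.
-/

noncomputable section

open Matrix

open Finset

section SummationByParts
variable {R : Type*} [CommRing R]

theorem sum_range_mul_eq_sum_range_sub_mul_sum_range_add (a c : ℕ → R) (p : ℕ) :
    ∑ i ∈ range p, a i * c i =
      ∑ k ∈ range p, (a k - a (k + 1)) * ∑ i ∈ range (k + 1), c i + a p * ∑ i ∈ range p, c i := by
  induction p with
  | zero => simp
  | succ p ih => simp only [sum_range_succ, ih]; ring

theorem sum_range_mul_eq_sum_range_sub_mul_sum_range {a : ℕ → R} {p : ℕ} (hp : a p = 0)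
    (c : ℕ → R) :
    ∑ i ∈ range p, a i * c i = ∑ k ∈ range p, (a k - a (k + 1)) * ∑ i ∈ range (k + 1), c i := by
  rw [sum_range_mul_eq_sum_range_sub_mul_sum_range_add, hp, zero_mul, add_zero]

theorem sum_range_sum_range_mul_eq {a b : ℕ → R} {p : ℕ} (ha : a p = 0) (hb : b p = 0)
    (S : ℕ → ℕ → R) :
    ∑ i ∈ range p, ∑ j ∈ range p, a i * b j * S i j =
      ∑ k ∈ range p, ∑ l ∈ range p, (a k - a (k + 1)) * (b l - b (l + 1)) *
        ∑ i ∈ range (k + 1), ∑ j ∈ range (l + 1), S i j := by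
  simp_rw [mul_assoc, ← mul_sum]
  rw [sum_range_mul_eq_sum_range_sub_mul_sum_range ha]
  refine sum_congr rfl fun k _ => congrArg _ ?_
  rw [sum_comm]
  simp_rw [← mul_sum]
  rw [sum_range_mul_eq_sum_range_sub_mul_sum_range hb]
  exact sum_congr rfl fun l _ => congrArg _ sum_comm

end SummationByParts

section Substochastic
variable {R : Type*} [CommRing R] [LinearOrder R] [IsStrictOrderedRing R]

theorem sum_range_sum_range_ite_eq_min (k l : ℕ) :
    ∑ i ∈ range (k + 1), ∑ j ∈ range (l + 1), (if i = j then (1 : R) else 0) =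
      (min k l + 1 : ℕ) := by
  have hfilter : (range (k + 1)).filter (· ≤ l) = range (min k l + 1) := by
    ext; simp only [mem_filter, mem_range]; omega
  simp [sum_ite_eq, sum_boole, hfilter]

theorem sum_range_sum_range_le_of_sum_le_one {p : ℕ} {S : ℕ → ℕ → R}
    (hS : ∀ i < p, ∀ j < p, 0 ≤ S i j) (hrow : ∀ i < p, ∑ j ∈ range p, S i j ≤ 1)
    {k l : ℕ} (hk : k < p) (hl : l < p) :
    ∑ i ∈ range (k + 1), ∑ j ∈ range (l + 1), S i j ≤ k + 1 := by
  calc ∑ i ∈ range (k + 1), ∑ j ∈ range (l + 1), S i j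
      ≤ ∑ i ∈ range (k + 1), ∑ j ∈ range p, S i j := by
        refine sum_le_sum fun i hi => sum_le_sum_of_subset_of_nonneg
          (range_subset_range.2 hl) fun j hj _ => hS i ?_ j (mem_range.1 hj)
        grind
    _ ≤ ∑ i ∈ range (k + 1), 1 := sum_le_sum fun i hi => hrow i (by grind)
    _ = k + 1 := by simp

theorem sum_range_sum_range_mul_le_of_substochastic {a b : ℕ → R} (ha : Antitone a)
    (hb : Antitone b) {p : ℕ} (hap : a p = 0) (hbp : b p = 0) {S : ℕ → ℕ → R}
    (hS : ∀ i < p, ∀ j < p, 0 ≤ S i j) (hrow : ∀ i < p, ∑ j ∈ range p, S i j ≤ 1)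
    (hcol : ∀ j < p, ∑ i ∈ range p, S i j ≤ 1) :
    ∑ i ∈ range p, ∑ j ∈ range p, a i * b j * S i j ≤ ∑ i ∈ range p, a i * b i := by
  have hdiag : ∑ i ∈ range p, a i * b i =
      ∑ i ∈ range p, ∑ j ∈ range p, a i * b j * if i = j then 1 else 0 :=
    sum_congr rfl fun i hi => by simp [hi]
  rw [hdiag, sum_range_sum_range_mul_eq hap hbp, sum_range_sum_range_mul_eq hap hbp]
  refine sum_le_sum fun k hk => sum_le_sum fun l hl => ?_
  rw [mem_range] at hk hl
  have hdiff : 0 ≤ (a k - a (k + 1)) * (b l - b (l + 1)) :=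
    mul_nonneg (sub_nonneg.2 (ha k.le_succ)) (sub_nonneg.2 (hb l.le_succ))
  refine mul_le_mul_of_nonneg_left ?_ hdiff
  rw [sum_range_sum_range_ite_eq_min, ← Nat.add_min_add_right, Nat.cast_min]
  push_cast
  refine le_min (by exact_mod_cast sum_range_sum_range_le_of_sum_le_one hS hrow hk hl) ?_
  rw [sum_comm]
  exact_mod_cast sum_range_sum_range_le_of_sum_le_one (fun j hj i hi => hS i hi j hj) hcol hl hk

end Substochastic

section ExtendByZero
variable {M : Type*} [Zero M] {p : ℕ}

def Fin.extendByZero (f : Fin p → M) (i : ℕ) : M :=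
  if h : i < p then f ⟨i, h⟩ else 0

@[simp]
theorem Fin.extendByZero_val (f : Fin p → M) (i : Fin p) : Fin.extendByZero f i = f i :=
  dif_pos i.isLt

theorem Fin.extendByZero_self (f : Fin p → M) : Fin.extendByZero f p = 0 :=
  dif_neg (lt_irrefl p)

theorem Fin.antitone_extendByZero [Preorder M] {f : Fin p → M} (hf : Antitone f)
    (hf0 : ∀ i, 0 ≤ f i) : Antitone (Fin.extendByZero f) := by
  intro i j hij
  unfold Fin.extendByZero
  split_ifs with hj hi hi
  · exact hf (Fin.mk_le_mk.2 hij)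
  · omega
  · exact hf0 _
  · exact le_rfl

end ExtendByZero

theorem sum_sum_mul_le_sum_mul_of_substochastic {R : Type*} [CommRing R] [LinearOrder R]
    [IsStrictOrderedRing R] {p : ℕ} {a b : Fin p → R} (ha : Antitone a) (ha0 : ∀ i, 0 ≤ a i)
    (hb : Antitone b) (hb0 : ∀ i, 0 ≤ b i) {S : Matrix (Fin p) (Fin p) R}
    (hS : ∀ i j, 0 ≤ S i j) (hrow : ∀ i, ∑ j, S i j ≤ 1) (hcol : ∀ j, ∑ i, S i j ≤ 1) :
    ∑ i, ∑ j, a i * b j * S i j ≤ ∑ i, a i * b i := by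
  set S' : ℕ → ℕ → R := Fin.extendByZero fun i => Fin.extendByZero (S i)
  have key := sum_range_sum_range_mul_le_of_substochastic (Fin.antitone_extendByZero ha ha0)
    (Fin.antitone_extendByZero hb hb0) (Fin.extendByZero_self a) (Fin.extendByZero_self b)
    (S := S') ?_ ?_ ?_
  · simpa [S', ← Fin.sum_univ_eq_sum_range] using key
  · intro i hi j hj
    simpa [S', Fin.extendByZero, hi, hj] using hS ⟨i, hi⟩ ⟨j, hj⟩
  · intro i hi
    simpa [S', ← Fin.sum_univ_eq_sum_range, Fin.extendByZero, hi] using hrow ⟨i, hi⟩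
  · intro j hj
    simpa [S', ← Fin.sum_univ_eq_sum_range, Fin.extendByZero, hj] using hcol ⟨j, hj⟩

theorem Matrix.mul_transpose_self_apply_self {R : Type*} [CommSemiring R] {m n : Type*}
    [Fintype n] (N : Matrix m n R) (i : m) : (N * Nᵀ) i i = ∑ j, N i j ^ 2 := by
  simp [mul_apply, sq]

section OrthonormalColumns
variable {R : Type*} [CommRing R] [LinearOrder R] [IsStrictOrderedRing R]
  {m p q : Type*} [Fintype m]

theorem sum_sq_transpose_mul_apply_le [Fintype q] [DecidableEq q] (U : Matrix m p R)
    {W : Matrix m q R} (hW : Wᵀ * W = 1) (i : p) : ∑ j, (Uᵀ * W) i j ^ 2 ≤ (Uᵀ * U) i i := by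
  -- the rows of `N` are the residuals of projecting the columns of `U` onto those of `W`
  set N := Uᵀ - Uᵀ * W * Wᵀ
  have hW' : Wᵀ * (W * (Wᵀ * U)) = Wᵀ * U := by rw [← Matrix.mul_assoc, hW, Matrix.one_mul]
  have hN : N * Nᵀ = Uᵀ * U - (Uᵀ * W) * (Uᵀ * W)ᵀ := by
    simp only [N, transpose_sub, transpose_mul, transpose_transpose, Matrix.sub_mul,
      Matrix.mul_sub, Matrix.mul_assoc, hW']
    abel
  have h : 0 ≤ (N * Nᵀ) i i := by rw [mul_transpose_self_apply_self]; positivity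
  rwa [hN, Matrix.sub_apply, mul_transpose_self_apply_self, sub_nonneg] at h

variable [DecidableEq p] [DecidableEq q] {U : Matrix m p R} {W : Matrix m q R}

theorem sum_sq_transpose_mul_apply_row_le_one [Fintype q] (hU : Uᵀ * U = 1) (hW : Wᵀ * W = 1)
    (i : p) : ∑ j, (Uᵀ * W) i j ^ 2 ≤ 1 := by
  simpa [hU] using sum_sq_transpose_mul_apply_le U hW i

theorem sum_sq_transpose_mul_apply_col_le_one [Fintype p] (hU : Uᵀ * U = 1) (hW : Wᵀ * W = 1)
    (j : q) : ∑ i, (Uᵀ * W) i j ^ 2 ≤ 1 := by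
  have hentry : ∀ i, (Uᵀ * W) i j = (Wᵀ * U) j i := fun i => by
    rw [← transpose_apply (Wᵀ * U), transpose_mul, transpose_transpose]
  simpa only [hentry] using sum_sq_transpose_mul_apply_row_le_one hW hU j

end OrthonormalColumns

theorem trace_transpose_mul_eq_trace_diagonal_mul {R : Type*} [CommRing R]
    {m n p q : Type*} [Fintype m] [Fintype n] [Fintype p] [Fintype q] [DecidableEq p]
    [DecidableEq q] (U : Matrix m p R) (σ : p → R) (V : Matrix n p R) (U' : Matrix m q R)
    (τ : q → R) (V' : Matrix n q R) :
    trace ((U * diagonal σ * Vᵀ)ᵀ * (U' * diagonal τ * V'ᵀ)) =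
      trace (diagonal σ * (Uᵀ * U') * diagonal τ * (V'ᵀ * V)) := by
  simp only [transpose_mul, transpose_transpose, diagonal_transpose, Matrix.mul_assoc]
  rw [trace_mul_comm]
  simp only [Matrix.mul_assoc]

theorem trace_diagonal_mul_diagonal_mul_le {R : Type*} [Field R] [LinearOrder R]
    [IsStrictOrderedRing R] {p : ℕ} {a b : Fin p → R} (ha : Antitone a) (ha0 : ∀ i, 0 ≤ a i)
    (hb : Antitone b) (hb0 : ∀ i, 0 ≤ b i) {A B : Matrix (Fin p) (Fin p) R}
    (hArow : ∀ i, ∑ j, A i j ^ 2 ≤ 1) (hAcol : ∀ j, ∑ i, A i j ^ 2 ≤ 1)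
    (hBrow : ∀ i, ∑ j, B i j ^ 2 ≤ 1) (hBcol : ∀ j, ∑ i, B i j ^ 2 ≤ 1) :
    trace (diagonal a * A * diagonal b * B) ≤ ∑ i, a i * b i := by
  set S : Matrix (Fin p) (Fin p) R := of fun i j => (A i j ^ 2 + B j i ^ 2) / 2
  have hS : ∀ i j, 0 ≤ S i j := fun i j => by simp only [S, of_apply]; positivity
  have hrow : ∀ i, ∑ j, S i j ≤ 1 := fun i => by
    simp only [S, of_apply, ← sum_div, sum_add_distrib]
    linarith [hArow i, hBcol i]
  have hcol : ∀ j, ∑ i, S i j ≤ 1 := fun j => by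
    simp only [S, of_apply, ← sum_div, sum_add_distrib]
    linarith [hAcol j, hBrow j]
  calc trace (diagonal a * A * diagonal b * B) = ∑ i, ∑ j, a i * b j * (A i j * B j i) := by
        refine sum_congr rfl fun i _ => ?_
        rw [diag_apply, mul_apply]
        exact sum_congr rfl fun j _ => by rw [mul_diagonal, diagonal_mul]; ring
    _ ≤ ∑ i, ∑ j, a i * b j * S i j := by
        gcongr with i _ j _
        · exact mul_nonneg (ha0 i) (hb0 j)
        · simp only [S, of_apply]
          linarith [two_mul_le_add_sq (A i j) (B j i)]
    _ ≤ ∑ i, a i * b i := sum_sum_mul_le_sum_mul_of_substochastic ha ha0 hb hb0 hS hrow hcol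

/-- Von Neumann's trace inequality: `⟨X, Z⟩ = trace (Xᵀ * Z) ≤ ∑ i, σᵢ(X) σᵢ(Z)`. -/
theorem von_neumann_trace_inequality {m n : ℕ} (X Z : Matrix (Fin m) (Fin n) ℝ)
    (UX : Matrix (Fin m) (Fin (min m n)) ℝ) (σX : Fin (min m n) → ℝ)
    (VX : Matrix (Fin n) (Fin (min m n)) ℝ)
    (UZ : Matrix (Fin m) (Fin (min m n)) ℝ) (σZ : Fin (min m n) → ℝ)
    (VZ : Matrix (Fin n) (Fin (min m n)) ℝ)
    (hX : IsThinSVD X UX σX VX) (hZ : IsThinSVD Z UZ σZ VZ) :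
    Matrix.trace (Xᵀ * Z) ≤ ∑ i, σX i * σZ i := by
  obtain ⟨rfl, hUX, hVX, hσX0, hσX⟩ := hX
  obtain ⟨rfl, hUZ, hVZ, hσZ0, hσZ⟩ := hZ
  rw [trace_transpose_mul_eq_trace_diagonal_mul]
  exact trace_diagonal_mul_diagonal_mul_le hσX hσX0 hσZ hσZ0
    (sum_sq_transpose_mul_apply_row_le_one hUX hUZ) (sum_sq_transpose_mul_apply_col_le_one hUX hUZ)
    (sum_sq_transpose_mul_apply_row_le_one hVZ hVX) (sum_sq_transpose_mul_apply_col_le_one hVZ hVX)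

end
end

section
/- Let X be a real m×n matrix with observed entries indexed by Ω ⊆ {1,…,m}×{1,…,n}, and define g(Z) := (1/2)‖P_Ω(X − Z)‖_F². Then for any two m×n real matrices Z and Z̄, g(Z) ≤ (1/2)‖P_Ω(X − Z) + P_Ω^⊥(Z̄ − Z)‖_F² = (1/2)‖(P_Ω(X) + P_Ω^⊥(Z̄)) − Z‖_F², with equality when Z = Z̄. -/
noncomputable section

open Matrix Filter

/-- `P_Ω`: keep the entries in `Ω`, zero out the rest. -/
def proj {m n : ℕ} (Ω : Finset (Fin m × Fin n)) (Y : Matrix (Fin m) (Fin n) ℝ) :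
    Matrix (Fin m) (Fin n) ℝ := Matrix.of fun i j => if (i, j) ∈ Ω then Y i j else 0

/-- `P_Ω^⊥`: zero out the entries in `Ω`, keep the rest. -/
def projPerp {m n : ℕ} (Ω : Finset (Fin m × Fin n)) (Y : Matrix (Fin m) (Fin n) ℝ) :
    Matrix (Fin m) (Fin n) ℝ := Matrix.of fun i j => if (i, j) ∈ Ω then 0 else Y i j

/-- `F(A,B) = (1/2)‖P_Ω(X − ABᵀ)‖_F² + (λ/2)(‖A‖_F² + ‖B‖_F²)`. -/
def Fobj {m n r : ℕ} (Ω : Finset (Fin m × Fin n)) (X : Matrix (Fin m) (Fin n) ℝ) (lam : ℝ)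
    (A : Matrix (Fin m) (Fin r) ℝ) (B : Matrix (Fin n) (Fin r) ℝ) : ℝ :=
  (1 / 2) * frobSq (proj Ω (X - A * Bᵀ)) + (lam / 2) * (frobSq A + frobSq B)

/-- `Q_A(Z₁|A,B)`. -/
def QA {m n r : ℕ} (Ω : Finset (Fin m × Fin n)) (X : Matrix (Fin m) (Fin n) ℝ) (lam : ℝ)
    (Z₁ : Matrix (Fin m) (Fin r) ℝ) (A : Matrix (Fin m) (Fin r) ℝ)
    (B : Matrix (Fin n) (Fin r) ℝ) : ℝ :=
  (1 / 2) * frobSq (proj Ω (X - Z₁ * Bᵀ) + projPerp Ω (A * Bᵀ - Z₁ * Bᵀ)) +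
    (lam / 2) * frobSq Z₁ + (lam / 2) * frobSq B

/-- `Q_B(Z₂|A,B)`. -/
def QB {m n r : ℕ} (Ω : Finset (Fin m × Fin n)) (X : Matrix (Fin m) (Fin n) ℝ) (lam : ℝ)
    (Z₂ : Matrix (Fin n) (Fin r) ℝ) (A : Matrix (Fin m) (Fin r) ℝ)
    (B : Matrix (Fin n) (Fin r) ℝ) : ℝ :=
  (1 / 2) * frobSq (proj Ω (X - A * Z₂ᵀ) + projPerp Ω (A * Bᵀ - A * Z₂ᵀ)) +
    (lam / 2) * frobSq A + (lam / 2) * frobSq Z₂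

/-- `(A_k, B_k)` are softImpute-ALS iterates: `A_{k+1} ∈ argmin Q_A(·|A_k,B_k)` and
`B_{k+1} ∈ argmin Q_B(·|A_{k+1},B_k)`. -/
def SoftImputeALS {m n r : ℕ} (Ω : Finset (Fin m × Fin n)) (X : Matrix (Fin m) (Fin n) ℝ)
    (lam : ℝ) (A : ℕ → Matrix (Fin m) (Fin r) ℝ) (B : ℕ → Matrix (Fin n) (Fin r) ℝ) : Prop :=
  ∀ k : ℕ,
    (∀ Z₁ : Matrix (Fin m) (Fin r) ℝ,
      QA Ω X lam (A (k + 1)) (A k) (B k) ≤ QA Ω X lam Z₁ (A k) (B k)) ∧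
    (∀ Z₂ : Matrix (Fin n) (Fin r) ℝ,
      QB Ω X lam (B (k + 1)) (A (k + 1)) (B k) ≤ QB Ω X lam Z₂ (A (k + 1)) (B k))

theorem majorization_of_observed_loss {m n : ℕ} (Ω : Finset (Fin m × Fin n))
    (X : Matrix (Fin m) (Fin n) ℝ) (Z Zbar : Matrix (Fin m) (Fin n) ℝ) :
    (1 / 2) * frobSq (proj Ω (X - Z)) ≤
      (1 / 2) * frobSq (proj Ω (X - Z) + projPerp Ω (Zbar - Z)) ∧
    (1 / 2) * frobSq (proj Ω (X - Z) + projPerp Ω (Zbar - Z)) =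
      (1 / 2) * frobSq ((proj Ω X + projPerp Ω Zbar) - Z) ∧
    (Z = Zbar →
      (1 / 2) * frobSq (proj Ω (X - Z)) =
        (1 / 2) * frobSq (proj Ω (X - Z) + projPerp Ω (Zbar - Z))) := by
  refine ⟨?_, ?_, ?_⟩
  · have h : frobSq (proj Ω (X - Z)) ≤ frobSq (proj Ω (X - Z) + projPerp Ω (Zbar - Z)) := by
      unfold frobSq proj projPerp
      refine Finset.sum_le_sum fun i _ => Finset.sum_le_sum fun j _ => ?_
      simp only [Matrix.add_apply, Matrix.of_apply]
      split_ifs with h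
      · simp
      · simp; positivity
    linarith
  · congr 1
    unfold frobSq proj projPerp
    refine Finset.sum_congr rfl fun i _ => Finset.sum_congr rfl fun j _ => ?_
    simp only [Matrix.add_apply, Matrix.sub_apply, Matrix.of_apply]
    split_ifs with h <;> ring
  · intro h
    subst h
    congr 1
    unfold frobSq proj projPerp
    refine Finset.sum_congr rfl fun i _ => Finset.sum_congr rfl fun j _ => ?_
    simp only [Matrix.add_apply, Matrix.sub_apply, Matrix.of_apply]
    split_ifs with h <;> simp

end
end
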